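/- Let R be an integral domain, d ≥ 1, and let ε be a real number with 0 ≤ ε ≤ 1 such that ε·m is a natural number. Then there exists an assignment a′ ∈ R^n satisfying at least (1−ε)·m of the m linear equations if and only if there exists a shift b ∈ R^{d·w} such that the shifted polynomial F_d(Y_d + b) has at most ((3+ε)·m + 1)^d − 1 non-constant monomials. -/

import Mathlib

open MvPolynomial

open scoped Classical

noncomputable section

/-- Extension of an `m × n` matrix to a function `ℕ → ℕ → R` vanishing outside its range. -/
def Aext {R : Type*} [CommRing R] (n m : ℕ) (A : Matrix (Fin m) (Fin n) R) : ℕ → ℕ → R :=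
  fun i j => if h : i < m ∧ j < n then A ⟨i, h.1⟩ ⟨j, h.2⟩ else 0

/-- The `w × w` matrix `C` of the paper (Section 5), with `w = max (2n) (2m)`:
`C_{i,j} = A_{i, j−w+n}` if `i < m` and `j ≥ w − n` (`0`-indexed), and `0` otherwise;
i.e. `A` is the top right block of `C` and the rest of `C` is zeros. -/
def Cmat {R : Type*} [CommRing R] (n m : ℕ) (A : Matrix (Fin m) (Fin n) R) :
    Matrix (Fin (max (2 * n) (2 * m))) (Fin (max (2 * n) (2 * m))) R :=
  fun i j =>
    if i.val < m ∧ max (2 * n) (2 * m) - n ≤ j.val then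
      Aext n m A i.val (j.val - (max (2 * n) (2 * m) - n))
    else 0

/-- The vector `e ∈ R^w`: `e_i = b_i` for `i < m` and `e_i = 0` otherwise. -/
def evec {R : Type*} [CommRing R] (n m : ℕ) (b : Fin m → R) :
    Fin (max (2 * n) (2 * m)) → R :=
  fun i => if h : i.val < m then b ⟨i.val, h⟩ else 0

/-- The polynomial `Q_S(y_1,…,y_w) = Σ_{i,j} C_{i,j}·y_i·y_j + Σ_i e_i·y_i + e_0`
of Section 5 of the paper. -/
def QS {R : Type*} [CommRing R] (n m : ℕ) (A : Matrix (Fin m) (Fin n) R)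
    (b : Fin m → R) (e0 : R) : MvPolynomial (Fin (max (2 * n) (2 * m))) R :=
  (∑ i, ∑ j, C (Cmat n m A i j) * X i * X j) + (∑ i, C (evec n m b i) * X i) + C e0

/-- The shift of a multivariate polynomial by a vector `a`: the image of `f` under the
`R`-algebra endomorphism sending each variable `y_i` to `y_i + a_i`. -/
def shift {R : Type*} [CommRing R] {σ : Type*} (a : σ → R) (f : MvPolynomial σ R) :
    MvPolynomial σ R :=
  aeval (fun i => X i + C (a i)) f

/-- The projection `a′ ∈ R^n` of `a ∈ R^w` to its last `n` coordinates:
`a′_j = a_{j + w − n}`. -/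
def lastn {R : Type*} (n m : ℕ) (a : Fin (max (2 * n) (2 * m)) → R) : Fin n → R :=
  fun j => a ⟨j.val + (max (2 * n) (2 * m) - n), by have := j.isLt; omega⟩

/-- The number of non-constant monomials (monomials of total degree at least `1`)
with nonzero coefficient in `f`. -/
def nonConst {R : Type*} [CommRing R] {σ : Type*} (f : MvPolynomial σ R) : ℕ :=
  (f.support.filter fun mo => mo ≠ 0).card


/-- `Fd n m d A b e0` is the product `F_d = ∏_{k=1}^d rename_k(Q_S)` of `d` copies of
`Q_S` in pairwise disjoint sets of `w` variables each. -/
def Fd {R : Type*} [CommRing R] (n m d : ℕ) (A : Matrix (Fin m) (Fin n) R)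
    (b : Fin m → R) (e0 : R) :
    MvPolynomial (Fin d × Fin (max (2 * n) (2 * m))) R :=
  ∏ k : Fin d, rename (fun i => (k, i)) (QS n m A b e0)

def ncSet {R : Type*} [CommRing R] {σ : Type*} (f : MvPolynomial σ R) : Finset (σ →₀ ℕ) :=
  f.support.filter fun mo => mo ≠ 0

lemma nonConst_eq_card_ncSet {R : Type*} [CommRing R] {σ : Type*} (f : MvPolynomial σ R) :
    nonConst f = (ncSet f).card := rfl

lemma mem_ncSet {R : Type*} [CommRing R] {σ : Type*} {f : MvPolynomial σ R} {μ : σ →₀ ℕ} :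
    μ ∈ ncSet f ↔ μ ∈ f.support ∧ μ ≠ 0 := Finset.mem_filter

section General
variable {R : Type*} [CommRing R] {σ : Type*}

/-- `f` only uses variables in `s`. -/
def lives (s : Set σ) (f : MvPolynomial σ R) : Prop :=
  ∀ μ ∈ f.support, ∀ x ∈ μ.support, x ∈ s

lemma lives_mono {s t : Set σ} (h : s ⊆ t) {f : MvPolynomial σ R} (hf : lives s f) :
    lives t f := fun μ hμ x hx => h (hf μ hμ x hx)

lemma lives_mul {s t : Set σ} {f g : MvPolynomial σ R} (hf : lives s f) (hg : lives t g) :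
    lives (s ∪ t) (f * g) := by
  intro μ hμ x hx
  obtain ⟨u, hu, v, hv, rfl⟩ := Finset.mem_add.1 (support_mul f g hμ)
  rcases Finset.mem_union.1 (Finsupp.support_add hx) with h | h
  · exact Or.inl (hf u hu x h)
  · exact Or.inr (hg v hv x h)

lemma lives_one (s : Set σ) : lives s (1 : MvPolynomial σ R) := by
  intro μ hμ x hx
  have : μ = 0 := by
    by_contra hne
    have := MvPolynomial.mem_support_iff.1 hμ
    rw [show ((1 : MvPolynomial σ R)) = C 1 from rfl, coeff_C, if_neg (by exact fun h => hne h.symm)] at this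
    exact this rfl
  simp [this] at hx

lemma lives_rename {τ : Type*} {φ : σ → τ} (hφ : Function.Injective φ) (f : MvPolynomial σ R) :
    lives (Set.range φ) (rename φ f) := by
  intro μ hμ x hx
  rw [support_rename_of_injective hφ] at hμ
  obtain ⟨ν, _, rfl⟩ := Finset.mem_image.1 hμ
  obtain ⟨y, _, rfl⟩ := Finset.mem_image.1 (Finsupp.mapDomain_support hx)
  exact ⟨y, rfl⟩

lemma lives_prod {ι : Type*} (π : σ → ι) (s : Finset ι) (F : ι → MvPolynomial σ R)
    (hF : ∀ k ∈ s, lives {x | π x = k} (F k)) :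
    lives {x | π x ∈ s} (∏ k ∈ s, F k) := by
  classical
  induction s using Finset.induction with
  | empty => simpa using lives_one (R := R) (σ := σ) ∅
  | @insert a s ha ih =>
    rw [Finset.prod_insert ha]
    have h1 : lives {x | π x = a} (F a) := hF a (Finset.mem_insert_self a s)
    have h2 := ih (fun k hk => hF k (Finset.mem_insert_of_mem hk))
    refine lives_mono ?_ (lives_mul h1 h2)
    intro x hx
    simp only [Set.mem_setOf_eq, Set.mem_union, Finset.mem_insert] at hx ⊢
    tauto

lemma nonConst_one : nonConst (1 : MvPolynomial σ R) = 0 := by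
  classical
  rw [nonConst, Finset.card_eq_zero, Finset.filter_eq_empty_iff]
  intro μ hμ
  by_contra hne
  have := MvPolynomial.mem_support_iff.1 hμ
  rw [show ((1 : MvPolynomial σ R)) = C 1 from rfl, coeff_C, if_neg (by exact fun h => hne h.symm)] at this
  exact this rfl

open scoped Pointwise in
lemma nonConst_mul_add_one_le (f g : MvPolynomial σ R) :
    nonConst (f * g) + 1 ≤ (nonConst f + 1) * (nonConst g + 1) := by
  classical
  set Sf := insert (0 : σ →₀ ℕ) (f.support.filter fun mo => mo ≠ 0) with hSf
  set Sg := insert (0 : σ →₀ ℕ) (g.support.filter fun mo => mo ≠ 0) with hSg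
  have hfs : f.support ⊆ Sf := by
    intro μ hμ; by_cases h : μ = 0 <;> simp [hSf, h, hμ]
  have hgs : g.support ⊆ Sg := by
    intro μ hμ; by_cases h : μ = 0 <;> simp [hSg, h, hμ]
  have h1 : (f * g).support ⊆ Sf + Sg :=
    (support_mul f g).trans (Finset.add_subset_add hfs hgs)
  have h0 : (0 : σ →₀ ℕ) ∈ Sf + Sg := by
    refine Finset.mem_add.2 ⟨0, Finset.mem_insert_self _ _, 0, Finset.mem_insert_self _ _, by simp⟩
  calc nonConst (f * g) + 1 ≤ ((Sf + Sg).erase 0).card + 1 := by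
        apply Nat.add_le_add_right
        apply Finset.card_le_card
        intro μ hμ
        rw [Finset.mem_filter] at hμ
        exact Finset.mem_erase.2 ⟨hμ.2, h1 hμ.1⟩
    _ = (Sf + Sg).card := Finset.card_erase_add_one h0
    _ ≤ Sf.card * Sg.card := Finset.card_add_le
    _ ≤ (nonConst f + 1) * (nonConst g + 1) := by
        exact Nat.mul_le_mul (Finset.card_insert_le _ _) (Finset.card_insert_le _ _)

lemma nonConst_prod_add_one_le {ι : Type*} (s : Finset ι) (F : ι → MvPolynomial σ R) :
    nonConst (∏ k ∈ s, F k) + 1 ≤ ∏ k ∈ s, (nonConst (F k) + 1) := by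
  classical
  induction s using Finset.induction with
  | empty => simp [nonConst_one]
  | @insert a s ha ih =>
    rw [Finset.prod_insert ha, Finset.prod_insert ha]
    calc nonConst (F a * ∏ k ∈ s, F k) + 1
        ≤ (nonConst (F a) + 1) * (nonConst (∏ k ∈ s, F k) + 1) := nonConst_mul_add_one_le _ _
      _ ≤ (nonConst (F a) + 1) * ∏ k ∈ s, (nonConst (F k) + 1) :=
          Nat.mul_le_mul_left _ ih

lemma nonConst_rename {τ : Type*} {φ : σ → τ} (hφ : Function.Injective φ)
    (f : MvPolynomial σ R) : nonConst (rename φ f) = nonConst f := by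
  classical
  rw [nonConst, nonConst, support_rename_of_injective hφ]
  rw [Finset.filter_image, Finset.card_image_of_injective _ (Finsupp.mapDomain_injective hφ)]
  congr 1
  apply Finset.filter_congr
  intro μ _
  constructor
  · intro h hc
    exact h (by rw [hc]; exact Finsupp.mapDomain_zero)
  · intro h hc
    exact h (Finsupp.mapDomain_injective hφ (by rw [hc]; exact Finsupp.mapDomain_zero.symm))

end General

section Lower
variable {R : Type*} [CommRing R] {σ : Type*}

lemma split_add_eq {p : σ → Prop} {u v μ ν : σ →₀ ℕ}
    (hu : ∀ x ∈ u.support, p x) (hv : ∀ x ∈ v.support, ¬ p x)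
    (hμ : ∀ x ∈ μ.support, p x) (hν : ∀ x ∈ ν.support, ¬ p x)
    (h : u + v = μ + ν) : u = μ ∧ v = ν := by
  have h' : ∀ x, u x + v x = μ x + ν x := fun x => by
    have := DFunLike.congr_fun h x; simpa using this
  have hz : ∀ (w : σ →₀ ℕ), (∀ x ∈ w.support, p x) → ∀ x, ¬ p x → w x = 0 := by
    intro w hw x hx
    by_contra hc
    exact hx (hw x (Finsupp.mem_support_iff.2 hc))
  have hz' : ∀ (w : σ →₀ ℕ), (∀ x ∈ w.support, ¬ p x) → ∀ x, p x → w x = 0 := by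
    intro w hw x hx
    by_contra hc
    exact hw x (Finsupp.mem_support_iff.2 hc) hx
  constructor <;> ext x <;> by_cases hx : p x
  · have := h' x; rw [hz' v hv x hx, hz' ν hν x hx] at this; omega
  · rw [hz u hu x hx, hz μ hμ x hx]
  · rw [hz' v hv x hx, hz' ν hν x hx]
  · have := h' x; rw [hz u hu x hx, hz μ hμ x hx] at this; omega

lemma coeff_mul_of_split (p : σ → Prop) {f g : MvPolynomial σ R}
    (hf : lives {x | p x} f) (hg : lives {x | ¬ p x} g)
    {μ ν : σ →₀ ℕ} (hμ : ∀ x ∈ μ.support, p x) (hν : ∀ x ∈ ν.support, ¬ p x) :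
    coeff (μ + ν) (f * g) = coeff μ f * coeff ν g := by
  classical
  rw [coeff_mul]
  apply Finset.sum_eq_single_of_mem (μ, ν) (Finset.HasAntidiagonal.mem_antidiagonal.2 rfl)
  rintro ⟨u, v⟩ huv hne
  by_contra hc
  have hu : ∀ x ∈ u.support, p x :=
    hf u (MvPolynomial.mem_support_iff.2 (left_ne_zero_of_mul hc))
  have hv : ∀ x ∈ v.support, ¬ p x :=
    hg v (MvPolynomial.mem_support_iff.2 (right_ne_zero_of_mul hc))
  obtain ⟨h1, h2⟩ := split_add_eq hu hv hμ hν (Finset.HasAntidiagonal.mem_antidiagonal.1 huv)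
  exact hne (by rw [Prod.ext_iff]; exact ⟨h1, h2⟩)

variable [IsDomain R]

lemma suppcard_mul_of_split (p : σ → Prop) {f g : MvPolynomial σ R}
    (hf : lives {x | p x} f) (hg : lives {x | ¬ p x} g) :
    f.support.card * g.support.card ≤ (f * g).support.card := by
  classical
  rw [← Finset.card_product]
  apply Finset.card_le_card_of_injOn (fun q => q.1 + q.2)
  · rintro ⟨μ, ν⟩ hq
    rw [Finset.mem_coe, Finset.mem_product] at hq
    rw [Finset.mem_coe]
    refine MvPolynomial.mem_support_iff.2 ?_
    rw [coeff_mul_of_split p hf hg (hf μ hq.1) (hg ν hq.2)]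
    exact mul_ne_zero (MvPolynomial.mem_support_iff.1 hq.1)
      (MvPolynomial.mem_support_iff.1 hq.2)
  · rintro ⟨μ, ν⟩ hq ⟨μ', ν'⟩ hq' h
    simp only [Finset.coe_product, Set.mem_prod, Finset.mem_coe] at hq hq'
    obtain ⟨h1, h2⟩ := split_add_eq (hf μ hq.1) (hg ν hq.2) (hf μ' hq'.1) (hg ν' hq'.2) h
    rw [Prod.ext_iff]; exact ⟨h1, h2⟩

lemma nonConst_mul_of_split (p : σ → Prop) {f g : MvPolynomial σ R}
    (hf : lives {x | p x} f) (hg : lives {x | ¬ p x} g) :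
    nonConst f * g.support.card ≤ nonConst (f * g) := by
  classical
  rw [nonConst, nonConst, ← Finset.card_product]
  apply Finset.card_le_card_of_injOn (fun q => q.1 + q.2)
  · rintro ⟨μ, ν⟩ hq
    rw [Finset.mem_coe, Finset.mem_product, Finset.mem_filter] at hq
    rw [Finset.mem_coe]
    refine Finset.mem_filter.2 ⟨MvPolynomial.mem_support_iff.2 ?_, ?_⟩
    · rw [coeff_mul_of_split p hf hg (hf μ hq.1.1) (hg ν hq.2)]
      exact mul_ne_zero (MvPolynomial.mem_support_iff.1 hq.1.1)
        (MvPolynomial.mem_support_iff.1 hq.2)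
    · intro hc
      apply hq.1.2
      ext x
      have := DFunLike.congr_fun hc x
      simp only [Finsupp.add_apply, Finsupp.coe_zero, Pi.zero_apply] at this ⊢
      omega
  · rintro ⟨μ, ν⟩ hq ⟨μ', ν'⟩ hq' h
    simp only [Finset.coe_product, Set.mem_prod, Finset.mem_coe, Finset.mem_filter] at hq hq'
    obtain ⟨h1, h2⟩ := split_add_eq (hf μ hq.1.1) (hg ν hq.2) (hf μ' hq'.1.1) (hg ν' hq'.2) h
    rw [Prod.ext_iff]; exact ⟨h1, h2⟩

lemma le_suppcard_prod {ι : Type*} (π : σ → ι) (s : Finset ι) (F : ι → MvPolynomial σ R)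
    (hF : ∀ k ∈ s, lives {x | π x = k} (F k)) :
    ∏ k ∈ s, (F k).support.card ≤ (∏ k ∈ s, F k).support.card := by
  classical
  induction s using Finset.induction with
  | empty =>
    simp only [Finset.prod_empty]
    rw [show (1 : MvPolynomial σ R) = monomial 0 1 from rfl, support_monomial]
    simp
  | @insert a s ha ih =>
    rw [Finset.prod_insert ha, Finset.prod_insert ha]
    have hg : lives {x | ¬ π x = a} (∏ k ∈ s, F k) := by
      refine lives_mono ?_ (lives_prod π s F (fun k hk => hF k (Finset.mem_insert_of_mem hk)))
      intro x hx hc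
      rw [Set.mem_setOf_eq, hc] at hx
      exact ha hx
    calc (F a).support.card * ∏ k ∈ s, (F k).support.card
        ≤ (F a).support.card * (∏ k ∈ s, F k).support.card :=
          Nat.mul_le_mul_left _ (ih (fun k hk => hF k (Finset.mem_insert_of_mem hk)))
      _ ≤ _ := suppcard_mul_of_split (fun x => π x = a)
            (hF a (Finset.mem_insert_self a s)) hg

lemma le_nonConst_prod {ι : Type*} (π : σ → ι) (s : Finset ι) (hs : s.Nonempty)
    (F : ι → MvPolynomial σ R)
    (hF : ∀ k ∈ s, lives {x | π x = k} (F k)) :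
    ∏ k ∈ s, nonConst (F k) ≤ nonConst (∏ k ∈ s, F k) := by
  classical
  obtain ⟨a, ha⟩ := hs
  rw [← Finset.insert_erase ha, Finset.prod_insert (Finset.notMem_erase a s),
    Finset.prod_insert (Finset.notMem_erase a s)]
  have hmem : ∀ k ∈ s.erase a, k ∈ s := fun k hk => Finset.mem_of_mem_erase hk
  have hg : lives {x | ¬ π x = a} (∏ k ∈ s.erase a, F k) := by
    refine lives_mono ?_ (lives_prod π (s.erase a) F (fun k hk => hF k (hmem k hk)))
    intro x hx hc
    rw [Set.mem_setOf_eq, hc] at hx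
    exact Finset.notMem_erase a s hx
  calc nonConst (F a) * ∏ k ∈ s.erase a, nonConst (F k)
      ≤ nonConst (F a) * ∏ k ∈ s.erase a, (F k).support.card := by
        apply Nat.mul_le_mul_left
        exact Finset.prod_le_prod' (fun k _ => Finset.card_filter_le _ _)
    _ ≤ nonConst (F a) * (∏ k ∈ s.erase a, F k).support.card :=
        Nat.mul_le_mul_left _ (le_suppcard_prod π _ F (fun k hk => hF k (hmem k hk)))
    _ ≤ _ := nonConst_mul_of_split (fun x => π x = a) (hF a ha) hg

end Lower

section Monos
variable {σ : Type*}

def m1 (i : σ) : σ →₀ ℕ := Finsupp.single i 1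

def m2 (i j : σ) : σ →₀ ℕ := Finsupp.single i 1 + Finsupp.single j 1

lemma m1_apply [DecidableEq σ] (i x : σ) : m1 i x = if i = x then 1 else 0 :=
  Finsupp.single_apply

lemma m2_apply [DecidableEq σ] (i j x : σ) :
    m2 i j x = (if i = x then 1 else 0) + (if j = x then 1 else 0) := by
  simp [m2, Finsupp.single_apply]

lemma m1_ne_zero (i : σ) : m1 i ≠ 0 := by
  classical
  intro h
  have := DFunLike.congr_fun h i
  rw [m1_apply] at this
  simp at this

lemma m2_ne_zero (i j : σ) : m2 i j ≠ 0 := by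
  classical
  intro h
  have := DFunLike.congr_fun h i
  rw [m2_apply] at this
  simp only [if_pos rfl, Finsupp.coe_zero, Pi.zero_apply] at this
  split_ifs at this <;> omega

lemma m2_ne_m1 (i j k : σ) : m2 i j ≠ m1 k := by
  classical
  intro h
  have hi := DFunLike.congr_fun h i
  have hj := DFunLike.congr_fun h j
  rw [m2_apply, m1_apply] at hi hj
  by_cases hij : i = j
  · subst hij
    rw [if_pos rfl] at hi
    split_ifs at hi <;> omega
  · rw [if_pos rfl, if_neg (fun hc => hij hc.symm)] at hi
    rw [if_pos rfl, if_neg hij] at hj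
    split_ifs at hi hj with h1 h2
    all_goals first | omega | exact hij (h1.symm.trans h2)

lemma m1_inj {i j : σ} (h : m1 i = m1 j) : i = j :=
  Finsupp.single_left_injective one_ne_zero h

lemma m2_comm (i j : σ) : m2 i j = m2 j i := add_comm _ _

lemma m2_right_cancel {i j j' : σ} (h : m2 i j = m2 i j') : j = j' := by
  have := add_left_cancel (a := Finsupp.single i (1 : ℕ)) h
  exact Finsupp.single_left_injective one_ne_zero this

lemma m2_cases [DecidableEq σ] {i j i' j' : σ} (hij : i ≠ j) (h : m2 i' j' = m2 i j) :
    (i' = i ∧ j' = j) ∨ (i' = j ∧ j' = i) := by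
  have hi' := DFunLike.congr_fun h i'
  rw [m2_apply, m2_apply, if_pos rfl] at hi'
  have hcases : i = i' ∨ j = i' := by
    by_contra hc
    push_neg at hc
    rw [if_neg hc.1, if_neg hc.2] at hi'
    split_ifs at hi' <;> omega
  rcases hcases with hc | hc
  · subst hc
    exact Or.inl ⟨rfl, m2_right_cancel h⟩
  · subst hc
    rw [m2_comm i j] at h
    exact Or.inr ⟨rfl, m2_right_cancel h⟩

end Monos

section MonosPoly
variable {R : Type*} [CommRing R] {σ : Type*}

lemma CmulXX (c : R) (i j : σ) :
    C c * X i * X j = monomial (m2 i j) c := by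
  rw [C_apply, show (X i : MvPolynomial σ R) = monomial (Finsupp.single i 1) 1 from rfl,
    show (X j : MvPolynomial σ R) = monomial (Finsupp.single j 1) 1 from rfl,
    monomial_mul, monomial_mul, mul_one, mul_one, zero_add]
  rfl

lemma CmulX (c : R) (i : σ) : C c * X i = monomial (m1 i) c := by
  rw [C_apply, show (X i : MvPolynomial σ R) = monomial (Finsupp.single i 1) 1 from rfl,
    monomial_mul, mul_one, zero_add]
  rfl

end MonosPoly

section QSsec
variable {R : Type*} [CommRing R] (n m : ℕ) (A : Matrix (Fin m) (Fin n) R)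
  (b : Fin m → R) (e0 : R)

/-- The linear coefficients of the shifted `Q_S`. -/
def rvec (a : Fin (max (2 * n) (2 * m)) → R) (i : Fin (max (2 * n) (2 * m))) : R :=
  evec n m b i + (∑ j, Cmat n m A i j * a j) + (∑ j, Cmat n m A j i * a j)

/-- The constant coefficient of the shifted `Q_S`. -/
def cconst (a : Fin (max (2 * n) (2 * m)) → R) : R :=
  e0 + (∑ i, evec n m b i * a i) + (∑ i, ∑ j, Cmat n m A i j * (a i * a j))

lemma shift_QS_eq (a : Fin (max (2 * n) (2 * m)) → R) :
    shift a (QS n m A b e0) =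
      (∑ i, ∑ j, C (Cmat n m A i j) * X i * X j)
        + ((∑ i, C (rvec n m A b a i) * X i) + C (cconst n m A b e0 a)) := by
  have e1 : shift a (QS n m A b e0)
      = (∑ i, ∑ j, (C (Cmat n m A i j) * X i * X j + C (Cmat n m A i j * a j) * X i
          + (C (Cmat n m A i j * a i) * X j + C (Cmat n m A i j * (a i * a j)))))
        + ((∑ i, (C (evec n m b i) * X i + C (evec n m b i * a i))) + C e0) := by
    unfold shift QS
    simp only [map_add, map_sum, map_mul, aeval_X, aeval_C, MvPolynomial.algebraMap_eq]
    rw [add_assoc]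
    congr 1
    · refine Finset.sum_congr rfl fun i _ => Finset.sum_congr rfl fun j _ => ?_
      ring
    · congr 1
      refine Finset.sum_congr rfl fun i _ => ?_
      ring
  rw [e1]
  have e2 : ∀ i : Fin (max (2 * n) (2 * m)),
      C (rvec n m A b a i) * X i
        = C (evec n m b i) * X i + ((∑ j, C (Cmat n m A i j * a j) * X i)
            + (∑ j, C (Cmat n m A j i * a j) * X i)) := by
    intro i
    unfold rvec
    rw [map_add, map_add, map_sum, map_sum, add_mul, add_mul, Finset.sum_mul, Finset.sum_mul]
    ring
  rw [Finset.sum_congr rfl fun i _ => e2 i]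
  have e3 : (C (cconst n m A b e0 a) : MvPolynomial (Fin (max (2 * n) (2 * m))) R)
      = C e0 + (∑ i, C (evec n m b i * a i)) + (∑ i, ∑ j, C (Cmat n m A i j * (a i * a j))) := by
    unfold cconst
    simp only [map_add, map_sum]
  rw [e3]
  have hcomm : (∑ i, ∑ j, C (Cmat n m A j i * a j) * X i
      : MvPolynomial (Fin (max (2 * n) (2 * m))) R)
      = ∑ i, ∑ j, C (Cmat n m A i j * a i) * X j := Finset.sum_comm
  simp only [Finset.sum_add_distrib]
  rw [hcomm]
  ring

lemma coeff_shift_m2 (a : Fin (max (2 * n) (2 * m)) → R)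
    {i j : Fin (max (2 * n) (2 * m))} (hij : i ≠ j) :
    coeff (m2 i j) (shift a (QS n m A b e0)) = Cmat n m A i j + Cmat n m A j i := by
  classical
  rw [shift_QS_eq, coeff_add, coeff_add]
  simp only [coeff_sum]
  rw [coeff_C, if_neg (fun h : (0 : _ →₀ ℕ) = m2 i j => m2_ne_zero i j h.symm)]
  have h2 : ∀ i' : Fin (max (2 * n) (2 * m)),
      coeff (m2 i j) (C (rvec n m A b a i') * X i') = 0 := by
    intro i'
    rw [CmulX, coeff_monomial, if_neg (fun h => m2_ne_m1 i j i' h.symm)]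
  simp only [h2, Finset.sum_const_zero, add_zero, zero_add]
  have hform : ∀ i' j' : Fin (max (2 * n) (2 * m)),
      coeff (m2 i j) (C (Cmat n m A i' j') * X i' * X j')
        = if m2 i' j' = m2 i j then Cmat n m A i' j' else 0 := by
    intro i' j'
    rw [CmulXX, coeff_monomial]
  simp only [hform]
  rw [← Finset.sum_product']
  have hne : ((i, j) : Fin (max (2 * n) (2 * m)) × Fin (max (2 * n) (2 * m))) ≠ (j, i) := by
    intro h
    exact hij (congrArg Prod.fst h)
  have hsub : (∑ p ∈ (Finset.univ ×ˢ Finset.univ : Finset (Fin (max (2 * n) (2 * m)) × Fin (max (2 * n) (2 * m)))),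
        if m2 p.1 p.2 = m2 i j then Cmat n m A p.1 p.2 else 0)
      = ∑ p ∈ ({(i, j), (j, i)} : Finset _),
        if m2 p.1 p.2 = m2 i j then Cmat n m A p.1 p.2 else 0 := by
    refine (Finset.sum_subset (Finset.subset_univ _) ?_).symm
    rintro ⟨i', j'⟩ _ hc
    rw [if_neg]
    intro h
    rcases m2_cases hij h with ⟨rfl, rfl⟩ | ⟨rfl, rfl⟩
    · exact hc (Finset.mem_insert_self _ _)
    · exact hc (Finset.mem_insert_of_mem (Finset.mem_singleton_self _))
  rw [hsub, Finset.sum_pair hne, if_pos rfl, if_pos (m2_comm j i)]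

lemma coeff_shift_m1 (a : Fin (max (2 * n) (2 * m)) → R) (i : Fin (max (2 * n) (2 * m))) :
    coeff (m1 i) (shift a (QS n m A b e0)) = rvec n m A b a i := by
  classical
  rw [shift_QS_eq, coeff_add, coeff_add]
  simp only [coeff_sum]
  rw [coeff_C, if_neg (fun h : (0 : _ →₀ ℕ) = m1 i => m1_ne_zero i h.symm)]
  have h1 : ∀ i' j' : Fin (max (2 * n) (2 * m)),
      coeff (m1 i) (C (Cmat n m A i' j') * X i' * X j') = 0 := by
    intro i' j'
    rw [CmulXX, coeff_monomial, if_neg (m2_ne_m1 i' j' i)]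
  simp only [h1, Finset.sum_const_zero, zero_add, add_zero]
  have h2 : ∀ i' : Fin (max (2 * n) (2 * m)),
      coeff (m1 i) (C (rvec n m A b a i') * X i')
        = if i' = i then rvec n m A b a i' else 0 := by
    intro i'
    rw [CmulX, coeff_monomial]
    by_cases h : i' = i
    · rw [if_pos (by rw [h]), if_pos h]
    · rw [if_neg (fun hc => h (m1_inj hc)), if_neg h]
  simp only [h2, Finset.sum_ite_eq', Finset.mem_univ, if_true]

lemma support_shift_cases (a : Fin (max (2 * n) (2 * m)) → R) {μ : Fin (max (2 * n) (2 * m)) →₀ ℕ}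
    (hμ : μ ∈ (shift a (QS n m A b e0)).support) :
    μ = 0 ∨ (∃ i j, Cmat n m A i j ≠ 0 ∧ μ = m2 i j)
      ∨ (∃ i, rvec n m A b a i ≠ 0 ∧ μ = m1 i) := by
  classical
  rw [MvPolynomial.mem_support_iff, shift_QS_eq, coeff_add, coeff_add] at hμ
  have htri : coeff μ (∑ i, ∑ j, C (Cmat n m A i j) * X i * X j) ≠ 0
      ∨ coeff μ (∑ i, C (rvec n m A b a i) * X i) ≠ 0
      ∨ coeff μ (C (cconst n m A b e0 a)) ≠ 0 := by
    by_contra hc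
    push_neg at hc
    rw [hc.1, hc.2.1, hc.2.2] at hμ
    simp at hμ
  rcases htri with h | h | h
  · rw [coeff_sum] at h
    obtain ⟨i, _, h⟩ := Finset.exists_ne_zero_of_sum_ne_zero h
    rw [coeff_sum] at h
    obtain ⟨j, _, h⟩ := Finset.exists_ne_zero_of_sum_ne_zero h
    rw [CmulXX, coeff_monomial] at h
    by_cases h' : m2 i j = μ
    · rw [if_pos h'] at h
      exact Or.inr (Or.inl ⟨i, j, h, h'.symm⟩)
    · rw [if_neg h'] at h
      exact absurd rfl h
  · rw [coeff_sum] at h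
    obtain ⟨i, _, h⟩ := Finset.exists_ne_zero_of_sum_ne_zero h
    rw [CmulX, coeff_monomial] at h
    by_cases h' : m1 i = μ
    · rw [if_pos h'] at h
      exact Or.inr (Or.inr ⟨i, h, h'.symm⟩)
    · rw [if_neg h'] at h
      exact absurd rfl h
  · rw [coeff_C] at h
    by_cases h' : (0 : Fin (max (2 * n) (2 * m)) →₀ ℕ) = μ
    · exact Or.inl h'.symm
    · rw [if_neg h'] at h
      exact absurd rfl h

/-- Embedding of `Fin n` as the last `n` coordinates. -/
def gembF (j : Fin n) : Fin (max (2 * n) (2 * m)) :=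
  ⟨j.val + (max (2 * n) (2 * m) - n), by have := j.isLt; omega⟩

/-- Embedding of `Fin m` as the first `m` coordinates. -/
def membF (i : Fin m) : Fin (max (2 * n) (2 * m)) :=
  ⟨i.val, by have := i.isLt; omega⟩

/-- The shift supported on the last `n` coordinates given by `a'`. -/
def az (a' : Fin n → R) : Fin (max (2 * n) (2 * m)) → R :=
  fun i => if h : max (2 * n) (2 * m) - n ≤ i.val then
    a' ⟨i.val - (max (2 * n) (2 * m) - n), by have := i.isLt; omega⟩ else 0

/-- The set of unsatisfied equations. -/
def Bset (a' : Fin n → R) : Finset (Fin m) :=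
  Finset.univ.filter (fun i => (∑ j, A i j * a' j) + b i ≠ 0)

/-- The positions of nonzero entries of `C`. -/
def Pfin : Finset (Fin (max (2 * n) (2 * m)) × Fin (max (2 * n) (2 * m))) :=
  Finset.univ.filter (fun p => Cmat n m A p.1 p.2 ≠ 0)

lemma lastn_az (a' : Fin n → R) : lastn n m (az n m a') = a' := by
  funext j
  unfold lastn az
  rw [dif_pos (Nat.le_add_left _ _)]
  congr 1
  exact Fin.ext (by simp)

lemma Cmat_eq_zero {i j : Fin (max (2 * n) (2 * m))}
    (h : ¬(i.val < m ∧ max (2 * n) (2 * m) - n ≤ j.val)) : Cmat n m A i j = 0 := by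
  unfold Cmat
  exact if_neg h

lemma Cmat_eq_A {i j : Fin (max (2 * n) (2 * m))}
    (h1 : i.val < m) (h2 : max (2 * n) (2 * m) - n ≤ j.val) :
    Cmat n m A i j = A ⟨i.val, h1⟩ ⟨j.val - (max (2 * n) (2 * m) - n), by have := j.isLt; omega⟩ := by
  unfold Cmat Aext
  rw [if_pos ⟨h1, h2⟩, dif_pos ⟨h1, by have := j.isLt; omega⟩]

lemma Cmat_apply (i : Fin m) (j : Fin n) :
    Cmat n m A (membF n m i) (gembF n m j) = A i j := by
  rw [Cmat_eq_A n m A (i := membF n m i) (j := gembF n m j) i.isLt (Nat.le_add_left _ _)]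
  congr 1
  exact Fin.ext (by simp [gembF])

lemma mem_Pfin_block {i j : Fin (max (2 * n) (2 * m))}
    (hp : (i, j) ∈ Pfin n m A) : i.val < m ∧ max (2 * n) (2 * m) - n ≤ j.val := by
  rw [Pfin, Finset.mem_filter] at hp
  by_contra hc
  exact hp.2 (Cmat_eq_zero n m A hc)

lemma mem_Pfin_ne {i j : Fin (max (2 * n) (2 * m))}
    (hp : (i, j) ∈ Pfin n m A) : i ≠ j := by
  obtain ⟨h1, h2⟩ := mem_Pfin_block n m A hp
  intro h
  rw [h] at h1
  omega

lemma Pfin_eq_image : Pfin n m A =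
    (Finset.univ.filter (fun p : Fin m × Fin n => A p.1 p.2 ≠ 0)).image
      (fun p => (membF n m p.1, gembF n m p.2)) := by
  classical
  ext ⟨i, j⟩
  simp only [Pfin, Finset.mem_filter, Finset.mem_univ, true_and, Finset.mem_image, Prod.exists]
  constructor
  · intro h
    have hb : i.val < m ∧ max (2 * n) (2 * m) - n ≤ j.val := by
      by_contra hc
      exact h (Cmat_eq_zero n m A hc)
    refine ⟨⟨i.val, hb.1⟩, ⟨j.val - (max (2 * n) (2 * m) - n), by have := j.isLt; omega⟩, ?_, ?_⟩
    · rw [Cmat_eq_A n m A hb.1 hb.2] at h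
      exact h
    · refine Prod.ext_iff.mpr ⟨Fin.ext rfl, Fin.ext ?_⟩
      simp only [gembF]
      have := hb.2
      omega
  · rintro ⟨i', j', hne, heq⟩
    obtain ⟨h1, h2⟩ := Prod.ext_iff.mp heq
    subst h1
    subst h2
    rw [Cmat_apply]
    exact hne

lemma card_Pfin (hA : ∀ i, (Finset.univ.filter fun j => A i j ≠ 0).card = 3) :
    (Pfin n m A).card = 3 * m := by
  classical
  rw [Pfin_eq_image, Finset.card_image_of_injective]
  · rw [Finset.card_eq_sum_card_fiberwise
      (f := Prod.fst) (t := Finset.univ) (fun x _ => Finset.mem_univ _)]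
    have hfib : ∀ i : Fin m,
        ((Finset.univ.filter (fun p : Fin m × Fin n => A p.1 p.2 ≠ 0)).filter
          (fun p => p.1 = i)).card = 3 := by
      intro i
      rw [← hA i]
      apply Finset.card_nbij' (fun p => p.2) (fun j => (i, j))
      · rintro ⟨i', j'⟩ hp
        simp only [Finset.mem_coe, Finset.mem_filter, Finset.mem_univ, true_and] at hp ⊢
        rw [← hp.2]
        exact hp.1
      · intro j hj
        simp only [Finset.mem_coe, Finset.mem_filter, Finset.mem_univ, true_and] at hj ⊢
        exact ⟨hj, trivial⟩
      · rintro ⟨i', j'⟩ hp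
        simp only [Finset.mem_coe, Finset.mem_filter] at hp
        exact Prod.ext_iff.mpr ⟨hp.2.symm, rfl⟩
      · intro j _
        rfl
    rw [Finset.sum_congr rfl fun i _ => hfib i, Finset.sum_const, Finset.card_univ,
      Fintype.card_fin, smul_eq_mul, mul_comm]
  · rintro ⟨i1, j1⟩ ⟨i2, j2⟩ h
    have h1 : membF n m i1 = membF n m i2 := congrArg Prod.fst h
    have h2 : gembF n m j1 = gembF n m j2 := congrArg Prod.snd h
    have v1 := congrArg Fin.val h1
    have v2 := congrArg Fin.val h2
    simp only [membF] at v1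
    simp only [gembF] at v2
    refine Prod.ext_iff.mpr ⟨Fin.ext ?_, Fin.ext ?_⟩
    · show (i1 : ℕ) = (i2 : ℕ)
      omega
    · show (j1 : ℕ) = (j2 : ℕ)
      omega

lemma rvec_membF (a : Fin (max (2 * n) (2 * m)) → R) (i : Fin m) :
    rvec n m A b a (membF n m i) = (∑ j, A i j * lastn n m a j) + b i := by
  unfold rvec
  have h1 : evec n m b (membF n m i) = b i := by
    unfold evec membF
    rw [dif_pos i.isLt]
  have h3 : (∑ j, Cmat n m A j (membF n m i) * a j) = 0 := by
    refine Finset.sum_eq_zero fun j _ => ?_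
    rw [Cmat_eq_zero n m A (by
      intro hc
      have hi := i.isLt
      have := hc.2
      simp only [membF] at this
      omega), zero_mul]
  have h2 : (∑ j, Cmat n m A (membF n m i) j * a j) = ∑ j, A i j * lastn n m a j := by
    have hout : ∀ j : Fin (max (2 * n) (2 * m)), j ∉ Finset.univ.image (gembF n m) →
        Cmat n m A (membF n m i) j * a j = 0 := by
      intro j hj
      have hlow : ¬ (max (2 * n) (2 * m) - n ≤ j.val) := by
        intro hge
        apply hj
        refine Finset.mem_image.2 ⟨⟨j.val - (max (2 * n) (2 * m) - n), by have := j.isLt; omega⟩,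
          Finset.mem_univ _, ?_⟩
        exact Fin.ext (by simp [gembF]; omega)
      rw [Cmat_eq_zero n m A (fun hc => hlow hc.2), zero_mul]
    have hinj : ∀ x ∈ Finset.univ, ∀ y ∈ Finset.univ, gembF n m x = gembF n m y → x = y := by
      intro x _ y _ h
      have := congrArg Fin.val h
      simp only [gembF] at this
      exact Fin.ext (by omega)
    rw [← Finset.sum_subset (Finset.subset_univ (Finset.univ.image (gembF n m)))
      (fun j _ hj => hout j hj), Finset.sum_image hinj]
    refine Finset.sum_congr rfl fun j _ => ?_
    rw [Cmat_apply]
    rfl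
  rw [h1, h2, h3, add_zero, add_comm]

lemma rvec_az_cases (a' : Fin n → R) (i : Fin (max (2 * n) (2 * m)))
    (h : rvec n m A b (az n m a') i ≠ 0) :
    ∃ i' : Fin m, i' ∈ Bset n m A b a' ∧ i = membF n m i' := by
  by_cases hi : i.val < m
  · refine ⟨⟨i.val, hi⟩, ?_, Fin.ext rfl⟩
    have hieq : i = membF n m ⟨i.val, hi⟩ := Fin.ext rfl
    rw [hieq, rvec_membF, lastn_az] at h
    simp only [Bset, Finset.mem_filter, Finset.mem_univ, true_and]
    exact h
  · exfalso
    apply h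
    unfold rvec
    have h1 : evec n m b i = 0 := by
      unfold evec
      rw [dif_neg hi]
    have h2 : (∑ j, Cmat n m A i j * az n m a' j) = 0 :=
      Finset.sum_eq_zero fun j _ => by
        rw [Cmat_eq_zero n m A (fun hc => hi hc.1), zero_mul]
    have h3 : (∑ j, Cmat n m A j i * az n m a' j) = 0 := by
      refine Finset.sum_eq_zero fun j _ => ?_
      by_cases hc : j.val < m ∧ max (2 * n) (2 * m) - n ≤ i.val
      · have : az n m a' j = 0 := by
          unfold az
          rw [dif_neg (by have := hc.1; omega)]
        rw [this, mul_zero]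
      · rw [Cmat_eq_zero n m A hc, zero_mul]
    rw [h1, h2, h3, add_zero, add_zero]

lemma nonConst_shift_QS_ge
    (hA : ∀ i, (Finset.univ.filter fun j => A i j ≠ 0).card = 3)
    (a : Fin (max (2 * n) (2 * m)) → R) :
    3 * m + (Bset n m A b (lastn n m a)).card
      ≤ nonConst (shift a (QS n m A b e0)) := by
  set T1 := (Pfin n m A).image (fun p => m2 p.1 p.2) with hT1
  set T2 := ((Bset n m A b (lastn n m a)).image (fun i => m1 (membF n m i))) with hT2
  have hT1card : T1.card = 3 * m := by
    rw [hT1, Finset.card_image_of_injOn, card_Pfin n m A hA]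
    rintro ⟨i, j⟩ hp ⟨i', j'⟩ hp' h
    rw [Finset.mem_coe] at hp hp'
    obtain ⟨hb1, hb2⟩ := mem_Pfin_block n m A hp
    obtain ⟨hb1', hb2'⟩ := mem_Pfin_block n m A hp'
    have h' : m2 i' j' = m2 i j := h.symm
    rcases m2_cases (mem_Pfin_ne n m A hp) h' with ⟨h1, h2⟩ | ⟨h1, h2⟩
    · exact Prod.ext_iff.mpr ⟨h1.symm, h2.symm⟩
    · exfalso
      have hv := congrArg Fin.val h1
      omega
  have hT2card : T2.card = (Bset n m A b (lastn n m a)).card := by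
    rw [hT2, Finset.card_image_of_injective]
    intro x y h
    have := congrArg Fin.val (m1_inj h)
    exact Fin.ext this
  have hdisj : Disjoint T1 T2 := by
    rw [Finset.disjoint_left]
    intro μ h1 h2
    obtain ⟨p, _, rfl⟩ := Finset.mem_image.1 h1
    obtain ⟨i, _, hμ⟩ := Finset.mem_image.1 h2
    exact m2_ne_m1 p.1 p.2 (membF n m i) hμ.symm
  have hsub : T1 ∪ T2 ⊆ ncSet (shift a (QS n m A b e0)) := by
    intro μ hμ
    rcases Finset.mem_union.1 hμ with h | h
    · obtain ⟨⟨i, j⟩, hp, rfl⟩ := Finset.mem_image.1 h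
      refine mem_ncSet.2 ⟨MvPolynomial.mem_support_iff.2 ?_, m2_ne_zero i j⟩
      rw [coeff_shift_m2 n m A b e0 a (mem_Pfin_ne n m A hp)]
      obtain ⟨hb1, hb2⟩ := mem_Pfin_block n m A hp
      have hz : Cmat n m A j i = 0 := by
        refine Cmat_eq_zero n m A ?_
        intro hc
        have := hc.1
        omega
      rw [hz, add_zero]
      exact Finset.mem_filter.1 hp |>.2
    · obtain ⟨i, hi, rfl⟩ := Finset.mem_image.1 h
      refine mem_ncSet.2 ⟨MvPolynomial.mem_support_iff.2 ?_, m1_ne_zero _⟩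
      rw [coeff_shift_m1, rvec_membF]
      simp only [Bset, Finset.mem_filter, Finset.mem_univ, true_and] at hi
      exact hi
  calc 3 * m + (Bset n m A b (lastn n m a)).card
      = (T1 ∪ T2).card := by rw [Finset.card_union_of_disjoint hdisj, hT1card, hT2card]
    _ ≤ (ncSet (shift a (QS n m A b e0))).card := Finset.card_le_card hsub
    _ = nonConst (shift a (QS n m A b e0)) := (nonConst_eq_card_ncSet _).symm

lemma nonConst_shift_QS_le
    (hA : ∀ i, (Finset.univ.filter fun j => A i j ≠ 0).card = 3) (a' : Fin n → R) :
    nonConst (shift (az n m a') (QS n m A b e0)) ≤ 3 * m + (Bset n m A b a').card := by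
  set T1 := (Pfin n m A).image (fun p => m2 p.1 p.2) with hT1def
  set T2 := ((Bset n m A b a').image (fun i => m1 (membF n m i))) with hT2def
  have hsub : ncSet (shift (az n m a') (QS n m A b e0)) ⊆ T1 ∪ T2 := by
    intro μ hμ
    obtain ⟨hsupp, hne⟩ := mem_ncSet.1 hμ
    rcases support_shift_cases n m A b e0 _ hsupp with h | ⟨i, j, hC, rfl⟩ | ⟨i, hr, rfl⟩
    · exact absurd h hne
    · refine Finset.mem_union_left _ (Finset.mem_image.2 ⟨(i, j), ?_, rfl⟩)
      exact Finset.mem_filter.2 ⟨Finset.mem_univ _, hC⟩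
    · obtain ⟨i', hi', rfl⟩ := rvec_az_cases n m A b a' i hr
      exact Finset.mem_union_right _ (Finset.mem_image.2 ⟨i', hi', rfl⟩)
  calc nonConst (shift (az n m a') (QS n m A b e0))
      = (ncSet (shift (az n m a') (QS n m A b e0))).card := nonConst_eq_card_ncSet _
    _ ≤ (T1 ∪ T2).card := Finset.card_le_card hsub
    _ ≤ T1.card + T2.card := Finset.card_union_le _ _
    _ ≤ 3 * m + (Bset n m A b a').card := by
        refine Nat.add_le_add ?_ ?_
        · rw [hT1def]
          exact (Finset.card_image_le).trans_eq (card_Pfin n m A hA)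
        · rw [hT2def]
          exact Finset.card_image_le

lemma shift_Fd (d : ℕ) (bs : Fin d × Fin (max (2 * n) (2 * m)) → R) :
    shift bs (Fd n m d A b e0)
      = ∏ k : Fin d, rename (fun i => (k, i))
          (shift (fun i => bs (k, i)) (QS n m A b e0)) := by
  unfold shift Fd
  rw [map_prod]
  refine Finset.prod_congr rfl fun k _ => ?_
  rw [aeval_rename]
  have h1 : ((fun i => X i + C (bs i)) ∘ (fun i => ((k, i) : Fin d × Fin (max (2 * n) (2 * m)))))
      = fun i => rename (fun i' => ((k, i') : Fin d × Fin (max (2 * n) (2 * m))))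
          (X i + C (bs (k, i))) := by
    funext i
    simp [Function.comp]
  rw [h1]
  exact (AlgHom.congr_fun
    (comp_aeval (fun i => X i + C (bs (k, i)))
      (rename (fun i' => ((k, i') : Fin d × Fin (max (2 * n) (2 * m)))))) _).symm

end QSsec

/-- **Lemma 5.5(2)** (under the integrality hypothesis `ε·m ∈ ℕ`): let `R` be an
integral domain, `d ≥ 1` and `0 ≤ ε ≤ 1` real with `ε·m` a natural number. Then there
exists an assignment `a′ ∈ R^n` satisfying at least `(1−ε)·m` of the `m` linear
equations if and only if there exists a shift `b ∈ R^{d·w}` such that the shifted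
polynomial `F_d(Y_d + b)` has at most `((3+ε)·m + 1)^d − 1` non-constant monomials. -/
theorem exists_satCount_ge_iff_nonConst_Fd_le {R : Type*} [CommRing R] [IsDomain R]
    (n m : ℕ) (hn : 1 ≤ n) (hm : 1 ≤ m) (A : Matrix (Fin m) (Fin n) R)
    (hA : ∀ i, (Finset.univ.filter fun j => A i j ≠ 0).card = 3)
    (b : Fin m → R) (e0 : R)
    (d : ℕ) (hd : 1 ≤ d)
    (ε : ℝ) (hε0 : 0 ≤ ε) (hε1 : ε ≤ 1) (hεm : ∃ k : ℕ, (k : ℝ) = ε * m) :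
    (∃ a' : Fin n → R,
        (1 - ε) * m ≤ ((Finset.univ.filter fun i : Fin m =>
            (∑ j, A i j * a' j) + b i = 0).card : ℝ))
      ↔ (∃ bs : Fin d × Fin (max (2 * n) (2 * m)) → R,
          (nonConst (shift bs (Fd n m d A b e0)) : ℝ) ≤ ((3 + ε) * m + 1) ^ d - 1) := by
  classical
  obtain ⟨knat, hk⟩ := hεm
  have hmR : (0 : ℝ) < (m : ℝ) := by exact_mod_cast hm
  have hcast : ((3 : ℝ) + ε) * m + 1 = ((3 * m + knat + 1 : ℕ) : ℝ) := by
    push_cast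
    linear_combination -hk
  have hsb : ∀ a' : Fin n → R,
      (Finset.univ.filter fun i : Fin m => (∑ j, A i j * a' j) + b i = 0).card
        + (Bset n m A b a').card = m := by
    intro a'
    have := Finset.card_filter_add_card_filter_not
      (s := (Finset.univ : Finset (Fin m)))
      (p := fun i => (∑ j, A i j * a' j) + b i = 0)
    simpa [Bset, ne_eq] using this
  have hinj : ∀ k : Fin d, Function.Injective
      (fun i : Fin (max (2 * n) (2 * m)) => ((k, i) : Fin d × Fin (max (2 * n) (2 * m)))) :=
    fun k x y h => congrArg Prod.snd h
  constructor
  · rintro ⟨a', ha'⟩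
    have hBle : (Bset n m A b a').card ≤ knat := by
      have h1 := hsb a'
      have h2 : ((Finset.univ.filter fun i : Fin m =>
          (∑ j, A i j * a' j) + b i = 0).card : ℝ) + ((Bset n m A b a').card : ℝ) = m := by
        exact_mod_cast congrArg (fun t : ℕ => (t : ℝ)) h1
      have h3 : ((Bset n m A b a').card : ℝ) ≤ knat := by
        rw [hk]
        nlinarith [ha']
      exact_mod_cast h3
    refine ⟨fun x => az n m a' x.2, ?_⟩
    have h1 : nonConst (shift (fun x : Fin d × Fin (max (2 * n) (2 * m)) => az n m a' x.2)
        (Fd n m d A b e0)) + 1 ≤ (3 * m + knat + 1) ^ d := by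
      rw [shift_Fd]
      calc nonConst (∏ k : Fin d, rename (fun i => (k, i))
              (shift (fun i => az n m a' i) (QS n m A b e0))) + 1
          ≤ ∏ k : Fin d, (nonConst (rename (fun i => ((k, i) : Fin d × Fin (max (2 * n) (2 * m))))
              (shift (fun i => az n m a' i) (QS n m A b e0))) + 1) :=
            nonConst_prod_add_one_le _ _
        _ ≤ ∏ _k : Fin d, (3 * m + knat + 1) := by
            refine Finset.prod_le_prod' fun k _ => ?_
            rw [nonConst_rename (hinj k)]
            have hle := nonConst_shift_QS_le n m A b e0 hA a'
            have : nonConst (shift (fun i => az n m a' i) (QS n m A b e0))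
                = nonConst (shift (az n m a') (QS n m A b e0)) := rfl
            omega
        _ = (3 * m + knat + 1) ^ d := by
            rw [Finset.prod_const, Finset.card_univ, Fintype.card_fin]
    have h2 : (1 : ℕ) ≤ (3 * m + knat + 1) ^ d := Nat.one_le_pow _ _ (by omega)
    have h3 : (nonConst (shift (fun x : Fin d × Fin (max (2 * n) (2 * m)) => az n m a' x.2)
        (Fd n m d A b e0)) : ℝ) + 1 ≤ ((3 * m + knat + 1 : ℕ) : ℝ) ^ d := by
      exact_mod_cast h1
    rw [hcast]
    push_cast at h3 ⊢
    linarith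
  · rintro ⟨bs, hbs⟩
    by_contra hc
    push_neg at hc
    have hfac : ∀ k : Fin d, 3 * m + knat + 1
        ≤ nonConst (shift (fun i => bs (k, i)) (QS n m A b e0)) := by
      intro k
      have hge := nonConst_shift_QS_ge n m A b e0 hA (fun i => bs (k, i))
      set a' := lastn n m (fun i => bs (k, i)) with ha'
      have hlt := hc a'
      have h1 := hsb a'
      have hBge : knat + 1 ≤ (Bset n m A b a').card := by
        have h2 : ((Finset.univ.filter fun i : Fin m =>
            (∑ j, A i j * a' j) + b i = 0).card : ℝ) + ((Bset n m A b a').card : ℝ) = m := by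
          exact_mod_cast congrArg (fun t : ℕ => (t : ℝ)) h1
        have h3 : (knat : ℝ) < ((Bset n m A b a').card : ℝ) := by
          rw [hk]
          nlinarith [hlt]
        have : knat < (Bset n m A b a').card := by exact_mod_cast h3
        omega
      omega
    have hNempty : (Finset.univ : Finset (Fin d)).Nonempty := ⟨⟨0, hd⟩, Finset.mem_univ _⟩
    have hprod : (3 * m + knat + 1) ^ d ≤ nonConst (shift bs (Fd n m d A b e0)) := by
      rw [shift_Fd]
      calc (3 * m + knat + 1) ^ d
          = ∏ _k : Fin d, (3 * m + knat + 1) := by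
            rw [Finset.prod_const, Finset.card_univ, Fintype.card_fin]
        _ ≤ ∏ k : Fin d, nonConst (rename (fun i => ((k, i) : Fin d × Fin (max (2 * n) (2 * m))))
              (shift (fun i => bs (k, i)) (QS n m A b e0))) := by
            refine Finset.prod_le_prod' fun k _ => ?_
            rw [nonConst_rename (hinj k)]
            exact hfac k
        _ ≤ nonConst (∏ k : Fin d, rename (fun i => (k, i))
              (shift (fun i => bs (k, i)) (QS n m A b e0))) := by
            refine le_nonConst_prod Prod.fst Finset.univ hNempty _ fun k _ => ?_
            refine lives_mono ?_ (lives_rename (hinj k) _)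
            rintro x ⟨i, rfl⟩
            rfl
    have hreal : ((3 * m + knat + 1 : ℕ) : ℝ) ^ d
        ≤ (nonConst (shift bs (Fd n m d A b e0)) : ℝ) := by
      exact_mod_cast hprod
    rw [hcast] at hbs
    linarith


end
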